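/- For odd d, the SWAP operator on ℂ^d ⊗ ℂ^d equals (1/d) times the sum over (r,s) ∈ ℤ_d × ℤ_d of W_{(r,s)} ⊗ W_{(−r,−s)}. -/
import Mathlib


open Matrix Complex BigOperators
open scoped Kronecker

noncomputable def tauC (d : ℕ) : ℂ := - Complex.exp (Real.pi * Complex.I / d)

/-- `U = diag(e^{2πik/d})`. -/
noncomputable def Umat (d : ℕ) [NeZero d] : Matrix (ZMod d) (ZMod d) ℂ :=
  Matrix.diagonal fun k => Complex.exp (2 * Real.pi * Complex.I * k.val / d)

/-- `V` the cyclic shift: `V e_r = e_{r+1}`. -/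
def Vmat (d : ℕ) [NeZero d] : Matrix (ZMod d) (ZMod d) ℂ :=
  fun i j => if i = j + 1 then 1 else 0

/-- Weyl–Heisenberg matrices `W_{(r,s)} = τ^{rs} V^r U^s`. -/
noncomputable def WH (d : ℕ) [NeZero d] (r s : ZMod d) : Matrix (ZMod d) (ZMod d) ℂ :=
  (tauC d) ^ (r.val * s.val) • ((Vmat d) ^ r.val * (Umat d) ^ s.val)

/-- The SWAP operator on `ℂ^d ⊗ ℂ^d`. -/
def SWAPmat (d : ℕ) [NeZero d] : Matrix (ZMod d × ZMod d) (ZMod d × ZMod d) ℂ :=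
  fun p q => if p.1 = q.2 ∧ p.2 = q.1 then 1 else 0

section Aux

variable {d : ℕ} [NeZero d]

lemma tauC_sq (d : ℕ) : tauC d ^ 2 = Complex.exp (2 * Real.pi * Complex.I / d) := by
  have h : tauC d ^ 2 = Complex.exp (Real.pi * Complex.I / d) ^ 2 := by rw [tauC]; ring
  rw [h, ← Complex.exp_nat_mul]
  congr 1
  push_cast
  ring

lemma tauC_pow_d (d : ℕ) [NeZero d] (hd : Odd d) : tauC d ^ d = 1 := by
  have hd0 : (d : ℂ) ≠ 0 := Nat.cast_ne_zero.mpr (NeZero.ne d)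
  rw [tauC, neg_pow, ← Complex.exp_nat_mul, hd.neg_one_pow,
    show (d : ℂ) * (Real.pi * Complex.I / d) = Real.pi * Complex.I by field_simp,
    Complex.exp_pi_mul_I]
  ring

/-- `τ` raised to a `ZMod d` exponent. -/
noncomputable def zf (d : ℕ) [NeZero d] (a : ZMod d) : ℂ := tauC d ^ a.val

lemma zf_nat (hd : Odd d) (n : ℕ) : tauC d ^ n = zf d (n : ZMod d) := by
  rw [zf, ZMod.val_natCast, pow_eq_pow_mod n (tauC_pow_d d hd)]

lemma zf_add (hd : Odd d) (a b : ZMod d) : zf d (a + b) = zf d a * zf d b := by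
  rw [zf, zf, zf, ← pow_add]
  conv_lhs => rw [pow_eq_pow_mod _ (tauC_pow_d d hd)]
  conv_rhs => rw [pow_eq_pow_mod _ (tauC_pow_d d hd)]
  congr 1
  rw [ZMod.val_add]
  exact Nat.mod_mod_of_dvd _ dvd_rfl

lemma zf_val_mul (hd : Odd d) (a b : ZMod d) :
    tauC d ^ (a.val * b.val) = zf d (a * b) := by
  rw [zf_nat hd]
  congr 1
  push_cast [ZMod.natCast_val, ZMod.cast_id]
  ring

lemma tauC_pow_ne_one (hd : Odd d) {a : ZMod d} (ha : a ≠ 0) : tauC d ^ a.val ≠ 1 := by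
  intro h
  have hω : IsPrimitiveRoot (Complex.exp (2 * Real.pi * Complex.I / d)) d :=
    Complex.isPrimitiveRoot_exp d (NeZero.ne d)
  have h2 : Complex.exp (2 * Real.pi * Complex.I / d) ^ a.val = 1 := by
    rw [← tauC_sq d, ← pow_mul, mul_comm 2 a.val, pow_mul, h, one_pow]
  have hdvd : d ∣ a.val := (hω.pow_eq_one_iff_dvd a.val).mp h2
  exact ha ((ZMod.val_eq_zero a).mp (Nat.eq_zero_of_dvd_of_lt hdvd a.val_lt))

lemma sum_val_eq_range (f : ℕ → ℂ) :
    ∑ s : ZMod d, f s.val = ∑ i ∈ Finset.range d, f i :=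
  Finset.sum_nbij' (fun s : ZMod d => s.val) (fun i : ℕ => (i : ZMod d))
    (fun a _ => Finset.mem_range.mpr a.val_lt)
    (fun _ _ => Finset.mem_univ _)
    (fun a _ => by simp [ZMod.natCast_val, ZMod.cast_id])
    (fun a ha => ZMod.val_cast_of_lt (Finset.mem_range.mp ha))
    (fun _ _ => rfl)

lemma sum_zf (hd : Odd d) (a : ZMod d) :
    ∑ s : ZMod d, zf d (s * a) = if a = 0 then (d : ℂ) else 0 := by
  have h1 : ∀ s : ZMod d, zf d (s * a) = (tauC d ^ a.val) ^ s.val := by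
    intro s
    rw [← pow_mul, mul_comm a.val, zf_val_mul hd]
  simp only [h1]
  rw [sum_val_eq_range (fun i => (tauC d ^ a.val) ^ i)]
  by_cases ha : a = 0
  · simp [ha, Finset.card_range]
  · rw [geom_sum_eq (tauC_pow_ne_one hd ha), ← pow_mul, mul_comm a.val d, pow_mul,
      tauC_pow_d d hd, one_pow, sub_self, zero_div, if_neg ha]

lemma Vmat_pow (m : ℕ) : ∀ i j : ZMod d,
    ((Vmat d) ^ m) i j = if i = j + (m : ZMod d) then 1 else 0 := by
  induction m with
  | zero => intro i j; simp [Matrix.one_apply]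
  | succ m ih =>
    intro i j
    rw [pow_succ, Matrix.mul_apply]
    simp only [ih, Vmat, mul_ite, mul_one, mul_zero]
    rw [Finset.sum_ite_eq' Finset.univ (j + 1) (fun k => if i = k + (m : ZMod d) then 1 else 0)]
    simp only [Finset.mem_univ, if_true]
    push_cast
    rw [show j + ((m : ZMod d) + 1) = j + 1 + (m : ZMod d) by ring]

lemma WH_apply (hd : Odd d) (r s i j : ZMod d) :
    WH d r s i j = if i = j + r then zf d (r * s + 2 * j * s) else 0 := by
  rw [WH, Matrix.smul_apply, Umat, Matrix.diagonal_pow, Matrix.mul_diagonal, Vmat_pow]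
  have hc : ((r.val : ZMod d)) = r := by simp [ZMod.natCast_val, ZMod.cast_id]
  rw [hc, Pi.pow_apply]
  have he : Complex.exp (2 * Real.pi * Complex.I * j.val / d) ^ s.val
      = tauC d ^ (2 * (j.val * s.val)) := by
    rw [show (2 : ℂ) * Real.pi * Complex.I * j.val / d
        = (j.val : ℂ) * (2 * Real.pi * Complex.I / d) by ring,
      Complex.exp_nat_mul, ← tauC_sq d, ← pow_mul, ← pow_mul]
  rw [he]
  by_cases h : i = j + r
  · rw [if_pos h, if_pos h, one_mul, smul_eq_mul, ← pow_add]
    rw [zf_nat hd]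
    congr 1
    push_cast [ZMod.natCast_val, ZMod.cast_id]
    ring
  · rw [if_neg h, if_neg h, zero_mul, smul_eq_mul, mul_zero]

lemma two_mul_eq_zero_iff (hd : Odd d) (c : ZMod d) : 2 * c = 0 ↔ c = 0 := by
  have hu : IsUnit (2 : ZMod d) := by
    have h2 : ((2 : ℕ) : ZMod d) = (2 : ZMod d) := by push_cast; rfl
    rw [← h2]
    rw [ZMod.isUnit_iff_coprime]
    exact (Nat.prime_two.coprime_iff_not_dvd).mpr (by
      rw [← even_iff_two_dvd]
      exact (Nat.not_even_iff_odd.mpr hd))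
  exact hu.mul_right_eq_zero

end Aux

theorem SWAP_eq_sum_WH (d : ℕ) [NeZero d] (hd : Odd d) :
    SWAPmat d = (1 / d : ℂ) • ∑ r : ZMod d, ∑ s : ZMod d, WH d r s ⊗ₖ WH d (-r) (-s) := by
  have hd0 : (d : ℂ) ≠ 0 := Nat.cast_ne_zero.mpr (NeZero.ne d)
  ext ⟨i1, i2⟩ ⟨j1, j2⟩
  simp only [Matrix.smul_apply, Matrix.sum_apply]
  have hterm : ∀ r s : ZMod d,
      (WH d r s ⊗ₖ WH d (-r) (-s)) (i1, i2) (j1, j2)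
      = if r = i1 - j1 ∧ i2 = j2 + -r then zf d ((2 * (r + j1 - j2)) * s) else 0 := by
    intro r s
    rw [Matrix.kroneckerMap_apply]
    simp only [WH_apply hd]
    by_cases h1 : r = i1 - j1
    · by_cases h2 : i2 = j2 + -r
      · rw [if_pos (by rw [h1]; ring), if_pos h2, if_pos ⟨h1, h2⟩, ← zf_add hd]
        congr 1
        ring
      · rw [if_neg h2, mul_zero, if_neg (by tauto)]
    · rw [if_neg (fun h => h1 (by rw [h]; ring)), zero_mul, if_neg (by tauto)]
  simp only [hterm]
  have hsplit : ∀ r : ZMod d,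
      (∑ s : ZMod d, if r = i1 - j1 ∧ i2 = j2 + -r then zf d ((2 * (r + j1 - j2)) * s) else 0)
      = if r = i1 - j1 then (if i2 = j2 + -r then
          (if (2 * (r + j1 - j2)) = 0 then (d : ℂ) else 0) else 0) else 0 := by
    intro r
    by_cases h1 : r = i1 - j1
    · by_cases h2 : i2 = j2 + -r
      · rw [if_pos h1, if_pos h2]
        have hs : ∀ s : ZMod d,
            (if r = i1 - j1 ∧ i2 = j2 + -r then zf d ((2 * (r + j1 - j2)) * s) else 0)
            = zf d (s * (2 * (r + j1 - j2))) := fun s => by rw [if_pos ⟨h1, h2⟩, mul_comm]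
        rw [Finset.sum_congr rfl fun s _ => hs s, sum_zf hd]
      · rw [if_pos h1, if_neg h2]
        simp only [if_neg (fun hc : _ ∧ _ => h2 hc.2), Finset.sum_const_zero]
    · rw [if_neg h1]
      simp only [if_neg (fun hc : _ ∧ _ => h1 hc.1), Finset.sum_const_zero]
  simp only [hsplit]
  rw [Finset.sum_ite_eq' Finset.univ (i1 - j1)]
  simp only [Finset.mem_univ, if_true]
  have hcond : ((i2 = j2 + -(i1 - j1)) ∧ (2 * ((i1 - j1) + j1 - j2) = 0)) ↔ (i1 = j2 ∧ i2 = j1) := by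
    rw [two_mul_eq_zero_iff hd]
    constructor
    · rintro ⟨h1, h2⟩
      have hij : i1 = j2 := by linear_combination h2
      refine ⟨hij, ?_⟩
      rw [h1, hij]; ring
    · rintro ⟨h1, h2⟩
      constructor
      · rw [h1, h2]; ring
      · rw [h1]; ring
  simp only [SWAPmat]
  by_cases hc : i1 = j2 ∧ i2 = j1
  · rw [if_pos hc, if_pos (hcond.mpr hc).1, if_pos (hcond.mpr hc).2, smul_eq_mul]
    field_simp
  · rw [if_neg hc]
    by_cases hA : i2 = j2 + -(i1 - j1)
    · rw [if_pos hA]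
      have : ¬ (2 * ((i1 - j1) + j1 - j2) = 0) := fun h => hc (hcond.mp ⟨hA, h⟩)
      rw [if_neg this, smul_zero]
    · rw [if_neg hA, smul_zero]
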